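/- Let n ≥ 3, let γ̃ : [a,b] → ℝⁿ be a C³ curve with γ̃'(t) ≠ 0 for all t, γ̃(a) = γ̃(b), γ̃'(a) = γ̃'(b), and γ̃(t₁) ≠ γ̃(t₂) for t₁ ≠ t₂ in [a,b). Let ε̄₁ > 0 be such that every x ∈ T̃_{ε̄₁}(Γ̃) has a unique nearest point p(x) ∈ Γ̃, set ṽ(x) = x − p(x), and assume ṽ is C¹ on the closure of T̃_{ε'}(Γ̃) for some ε' ∈ (0, ε̄₁). Then lim_{ε→0⁺} sup{|n − 1 − div ṽ(x)| : x ∈ T̃_ε(Γ̃)} = 0 and lim_{ε→0⁺} sup{dṽ(x)[η]·η : x ∈ T̃_ε(Γ̃), η ∈ ℝⁿ, |η| = 1} = 1, where dṽ(x) denotes the (Fréchet) derivative of ṽ at x and div ṽ its trace. -/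

import Mathlib

open Metric Set

noncomputable section

abbrev Euc (n : ℕ) := EuclideanSpace ℝ (Fin n)

/-- Derivative of the curve `γ` within `[a,b]`. -/
def curveDeriv {n : ℕ} (γ : ℝ → Euc n) (a b t : ℝ) : Euc n :=
  derivWithin γ (Set.Icc a b) t

/-- The tubular neighbourhood `T̃_ε(Γ) = {x : dist(x,Γ) < ε}`. -/
def distTube {n : ℕ} (Γ : Set (Euc n)) (ε : ℝ) : Set (Euc n) :=
  {x | infDist x Γ < ε}

/-!
The field `ṽ = id - p` vanishes on `Γ`, and it is the identity along short normal segments: for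
`η ⊥ γ'(t)` the nearest point of `Γ` to `γ t + σ • η` is `γ t` for small `σ`, by a second-order
Taylor estimate near the parameters of `γ t` and compactness elsewhere. Hence at points of `Γ` the
differential `dṽ` is the orthogonal projection onto the normal hyperplane: its trace is `n - 1`,
and its quadratic form is at most `1` on unit vectors, with equality on normal ones. Continuity of
`dṽ` near the compact curve carries these bounds over to thin tubes around `Γ`.
-/

open Filter Topology Module
open scoped RealInnerProductSpace NNReal

theorem Convex.norm_sub_sub_smul_derivWithin_le {E : Type*} [NormedAddCommGroup E]
    [NormedSpace ℝ E] {f : ℝ → E} {s : Set ℝ} {K : ℝ≥0} (hs : Convex ℝ s)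
    (hf : DifferentiableOn ℝ f s) (hf' : LipschitzOnWith K (derivWithin f s) s) {x y : ℝ}
    (hx : x ∈ s) (hy : y ∈ s) :
    ‖f y - f x - (y - x) • derivWithin f s x‖ ≤ K * (y - x) ^ 2 := by
  set f' := derivWithin f s
  have hxy : uIcc x y ⊆ s := hs.ordConnected.uIcc_subset hx hy
  have hderiv : ∀ u ∈ uIcc x y,
      HasDerivWithinAt (fun u => f u - u • f' x) (f' u - f' x) (uIcc x y) u := fun u hu =>
    (((hf u (hxy hu)).hasDerivWithinAt).mono hxy).sub (by
      simpa using ((hasDerivAt_id u).smul_const (f' x)).hasDerivWithinAt)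
  have hbound : ∀ u ∈ uIcc x y, ‖f' u - f' x‖ ≤ K * |y - x| := fun u hu =>
    (hf'.norm_sub_le (hxy hu) hx).trans
      (mul_le_mul_of_nonneg_left (abs_sub_left_of_mem_uIcc hu) K.2)
  calc ‖f y - f x - (y - x) • f' x‖ = ‖(f y - y • f' x) - (f x - x • f' x)‖ := by
        rw [sub_smul]; abel_nf
    _ ≤ K * |y - x| * ‖y - x‖ :=
        (convex_uIcc x y).norm_image_sub_le_of_norm_hasDerivWithin_le hderiv hbound
          left_mem_uIcc right_mem_uIcc
    _ = K * (y - x) ^ 2 := by rw [Real.norm_eq_abs, mul_assoc, ← sq, sq_abs]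

theorem ContDiffOn.exists_norm_sub_sub_smul_derivWithin_Icc_le {E : Type*} [NormedAddCommGroup E]
    [NormedSpace ℝ E] {f : ℝ → E} {a b : ℝ} (hab : a < b) (hf : ContDiffOn ℝ 2 f (Icc a b)) :
    ∃ M : ℝ, ∀ x ∈ Icc a b, ∀ y ∈ Icc a b,
      ‖f y - f x - (y - x) • derivWithin f (Icc a b) x‖ ≤ M * (y - x) ^ 2 := by
  obtain ⟨K, hK⟩ := (hf.derivWithin (uniqueDiffOn_Icc hab) (m := 1) (by norm_num))
    |>.exists_lipschitzOnWith one_ne_zero (convex_Icc a b) isCompact_Icc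
  exact ⟨K, fun x hx y hy => (convex_Icc a b).norm_sub_sub_smul_derivWithin_le
    (hf.differentiableOn (by norm_num)) hK hx hy⟩

theorem eventually_norm_smul_le_norm_add_smul_sub {E : Type*} [NormedAddCommGroup E]
    [InnerProductSpace ℝ E] {f : ℝ → E} {s : Set ℝ} {t₀ M : ℝ} {T η : E} (hT : T ≠ 0)
    (hη : ⟪η, T⟫ = 0) (hf : ∀ t ∈ s, ‖f t - f t₀ - (t - t₀) • T‖ ≤ M * (t - t₀) ^ 2) :
    ∀ᶠ p : ℝ × ℝ in 𝓝 (0, t₀), p.2 ∈ s → ‖p.1 • η‖ ≤ ‖f t₀ + p.1 • η - f p.2‖ := by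
  set C := |M| + 1
  have hC : 0 < C := by positivity
  have hT' : 0 < ‖T‖ := norm_pos_iff.2 hT
  set ρ := ‖T‖ / (2 * C)
  set σ₀ := ‖T‖ ^ 2 / (8 * C * (‖η‖ + 1))
  have hnhds : ball 0 σ₀ ×ˢ ball t₀ ρ ∈ 𝓝 ((0 : ℝ), t₀) :=
    prod_mem_nhds (ball_mem_nhds _ (by positivity)) (ball_mem_nhds _ (by positivity))
  filter_upwards [hnhds] with ⟨σ, t⟩ ⟨hσ, ht⟩ hts
  rw [mem_ball, Real.dist_eq, sub_zero, lt_div_iff₀ (by positivity)] at hσ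
  rw [mem_ball, Real.dist_eq, lt_div_iff₀ (by positivity)] at ht
  set u := t - t₀
  set w := f t - f t₀ with hw_def
  have hR : ‖w - u • T‖ ≤ C * u ^ 2 :=
    (hf t hts).trans (mul_le_mul_of_nonneg_right (by linarith [le_abs_self M]) (sq_nonneg u))
  clear_value u w
  -- `‖σ • η - w‖² = ‖σ • η‖² - 2 σ ⟪η, w⟫ + ‖w‖²`, where `‖w‖` is of order `|u|` while the
  -- orthogonality of `η` and `T` makes `⟪η, w⟫` of order `u²`
  have hw : |u| * ‖T‖ / 2 ≤ ‖w‖ := by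
    have := norm_sub_norm_le (u • T) (u • T - w)
    rw [sub_sub_cancel, norm_smul, Real.norm_eq_abs, norm_sub_rev] at this
    rw [← sq_abs] at hR
    nlinarith [abs_nonneg u]
  have hηw : |⟪η, w⟫| ≤ ‖η‖ * (C * u ^ 2) := by
    have : ⟪η, w - u • T⟫ = ⟪η, w⟫ := by
      rw [inner_sub_right, real_inner_smul_right, hη, mul_zero, sub_zero]
    rw [← this]
    exact (abs_real_inner_le_norm _ _).trans (mul_le_mul_of_nonneg_left hR (norm_nonneg η))
  have h₁ : σ * ⟪η, w⟫ ≤ |σ| * (‖η‖ * (C * u ^ 2)) := by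
    refine (le_abs_self _).trans ?_
    rw [abs_mul]
    exact mul_le_mul_of_nonneg_left hηw (abs_nonneg σ)
  have h₂ : |σ| * (‖η‖ * (C * u ^ 2)) * 8 ≤ ‖T‖ ^ 2 * u ^ 2 := by
    have : |σ| * ‖η‖ * (8 * C) ≤ ‖T‖ ^ 2 := by nlinarith [abs_nonneg σ]
    nlinarith [sq_nonneg u]
  have h₃ : ‖T‖ ^ 2 * u ^ 2 ≤ 4 * ‖w‖ ^ 2 := by
    have := pow_le_pow_left₀ (by positivity) hw 2
    rw [← sq_abs u]; linarith
  rw [show f t₀ + σ • η - f t = σ • η - w by rw [hw_def]; abel,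
    ← sq_le_sq₀ (norm_nonneg _) (norm_nonneg _), norm_sub_sq_real, real_inner_smul_left]
  linarith

theorem apply_eq_self_of_mem {X : Type*} [PseudoMetricSpace X] {Γ : Set X} {ε : ℝ} {p : X → X}
    (hε : 0 < ε) (hp : ∀ x, infDist x Γ < ε → ∀ y ∈ Γ, dist x y = infDist x Γ → y = p x)
    {y : X} (hy : y ∈ Γ) : p y = y := by
  refine (hp _ ?_ _ hy ?_).symm <;> rw [infDist_zero_of_mem hy]
  exacts [hε, dist_self _]

theorem IsCompact.exists_forall_dist_lt_of_continuousAt {α β : Type*} [PseudoMetricSpace α]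
    [PseudoMetricSpace β] {s : Set α} (hs : IsCompact s) {f : α → β}
    (hf : ∀ x ∈ s, ContinuousAt f x) {r : ℝ} (hr : 0 < r) :
    ∃ δ > 0, ∀ x ∈ s, ∀ y, dist x y < δ → dist (f x) (f y) < r := by
  obtain ⟨δ, hδ, h⟩ := Metric.mem_uniformity_dist.1
    (hs.uniformContinuousAt_of_continuousAt f hf (Metric.dist_mem_uniformity hr))
  exact ⟨δ, hδ, fun x hx y hxy => h hxy hx⟩

theorem Submodule.trace_starProjection {𝕜 : Type*} [RCLike 𝕜] {F : Type*} [NormedAddCommGroup F]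
    [InnerProductSpace 𝕜 F] [FiniteDimensional 𝕜 F] (K : Submodule 𝕜 F) :
    LinearMap.trace 𝕜 F K.starProjection = finrank 𝕜 K :=
  LinearMap.IsProj.trace ⟨K.starProjection_apply_mem, fun _ => K.starProjection_eq_self_iff.2⟩

section InnerProductSpace

variable {E : Type*} [NormedAddCommGroup E] [InnerProductSpace ℝ E]

theorem ContinuousLinearMap.eq_starProjection_orthogonal_span_singleton {D : E →L[ℝ] E} {T : E}
    (hT : D T = 0) (hperp : ∀ η, ⟪η, T⟫ = 0 → D η = η) : D = (ℝ ∙ T)ᗮ.starProjection := by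
  ext x
  obtain ⟨c, hc⟩ := Submodule.mem_span_singleton.1 ((ℝ ∙ T).starProjection_apply_mem x)
  have hx := (ℝ ∙ T).starProjection_add_starProjection_orthogonal x
  conv_lhs => rw [← hx, map_add, ← hc, map_smul, hT, smul_zero, zero_add]
  exact hperp _ (Submodule.mem_orthogonal_singleton_iff_inner_left.1
    ((ℝ ∙ T)ᗮ.starProjection_apply_mem x))

theorem Submodule.inner_starProjection_self_le (K : Submodule ℝ E) [K.HasOrthogonalProjection]
    (x : E) : ⟪K.starProjection x, x⟫ ≤ ‖x‖ ^ 2 :=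
  calc ⟪K.starProjection x, x⟫ ≤ ‖K.starProjection x‖ * ‖x‖ := real_inner_le_norm _ _
    _ ≤ ‖x‖ ^ 2 := by rw [sq]; gcongr; exact K.norm_starProjection_apply_le x

theorem ContinuousLinearMap.continuous_trace [FiniteDimensional ℝ E] :
    Continuous fun A : E →L[ℝ] E => LinearMap.trace ℝ E A :=
  ((LinearMap.trace ℝ E).comp (ContinuousLinearMap.coeLM ℝ)).continuous_of_finiteDimensional

theorem ContinuousLinearMap.inner_apply_self_le_add_dist (A B : E →L[ℝ] E) (x : E) :
    ⟪A x, x⟫ ≤ ⟪B x, x⟫ + dist A B * ‖x‖ ^ 2 := by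
  have h := (real_inner_le_norm ((A - B) x) x).trans
    (mul_le_mul_of_nonneg_right ((A - B).le_opNorm x) (norm_nonneg x))
  rw [sub_apply, inner_sub_left] at h
  rw [dist_eq_norm]
  linarith

theorem trace_starProjection_orthogonal_span_singleton [FiniteDimensional ℝ E] {T : E}
    (hT : T ≠ 0) :
    LinearMap.trace ℝ E (ℝ ∙ T)ᗮ.starProjection = (finrank ℝ E : ℝ) - 1 := by
  rw [Submodule.trace_starProjection, ← (ℝ ∙ T).finrank_add_finrank_orthogonal,
    finrank_span_singleton hT]
  push_cast; ring

theorem exists_norm_eq_one_inner_starProjection_orthogonal_span_singleton_eq_one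
    [FiniteDimensional ℝ E] (hE : 2 ≤ finrank ℝ E) {T : E} (hT : T ≠ 0) :
    ∃ η : E, ‖η‖ = 1 ∧ ⟪(ℝ ∙ T)ᗮ.starProjection η, η⟫ = 1 := by
  have hK : (ℝ ∙ T)ᗮ ≠ ⊥ := by
    intro h
    have := (ℝ ∙ T).finrank_add_finrank_orthogonal
    rw [h, finrank_bot, finrank_span_singleton hT] at this
    omega
  obtain ⟨η, hη, hη0⟩ := Submodule.exists_mem_ne_zero_of_ne_bot hK
  have hunit : ‖‖η‖⁻¹ • η‖ = 1 := norm_smul_inv_norm hη0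
  refine ⟨‖η‖⁻¹ • η, hunit, ?_⟩
  rw [Submodule.starProjection_eq_self_iff.2 ((ℝ ∙ T)ᗮ.smul_mem _ hη),
    real_inner_self_eq_norm_sq, hunit, one_pow]

theorem IsCompact.exists_forall_infDist_lt_trace_lt_inner_lt [FiniteDimensional ℝ E]
    {s : Set E} (hs : IsCompact s) (hne : s.Nonempty) {D : E → E →L[ℝ] E}
    (hD : ∀ y ∈ s, ContinuousAt D y) (hDs : ∀ y ∈ s, ∃ T ≠ 0, D y = (ℝ ∙ T)ᗮ.starProjection)
    {δ : ℝ} (hδ : 0 < δ) :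
    ∃ ρ > 0, ∀ x, infDist x s < ρ →
      |(finrank ℝ E : ℝ) - 1 - LinearMap.trace ℝ E (D x)| < δ ∧
      ∀ η : E, ‖η‖ = 1 → ⟪D x η, η⟫ < 1 + δ := by
  obtain ⟨ρ₁, hρ₁, htr⟩ := hs.exists_forall_dist_lt_of_continuousAt
    (f := fun y => LinearMap.trace ℝ E (D y))
    (fun y hy => ContinuousLinearMap.continuous_trace.continuousAt.comp (hD y hy)) hδ
  obtain ⟨ρ₂, hρ₂, hclose⟩ := hs.exists_forall_dist_lt_of_continuousAt hD hδ
  refine ⟨min ρ₁ ρ₂, by positivity, fun x hx => ?_⟩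
  obtain ⟨y, hy, hxy⟩ := (infDist_lt_iff hne).1 hx
  obtain ⟨T, hT, hDy⟩ := hDs y hy
  rw [dist_comm] at hxy
  refine ⟨?_, fun η hη => ?_⟩
  · have := htr y hy x (hxy.trans_le (min_le_left _ _))
    rwa [hDy, trace_starProjection_orthogonal_span_singleton hT, Real.dist_eq] at this
  · have hdist := hclose y hy x (hxy.trans_le (min_le_right _ _))
    have hle := (D x).inner_apply_self_le_add_dist (D y) η
    have hP := (ℝ ∙ T)ᗮ.inner_starProjection_self_le η
    rw [hη, one_pow, mul_one, dist_comm] at hle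
    rw [hη, one_pow, ← hDy] at hP
    linarith

end InnerProductSpace

theorem derivWithin_Icc_eq_of_apply_eq {E : Type*} [NormedAddCommGroup E] [NormedSpace ℝ E]
    {γ : ℝ → E} {a b : ℝ} (hγinj : InjOn γ (Ico a b)) (hclose : γ a = γ b)
    (hclose' : derivWithin γ (Icc a b) a = derivWithin γ (Icc a b) b) {s t : ℝ}
    (hs : s ∈ Icc a b) (ht : t ∈ Icc a b) (hst : γ s = γ t) :
    derivWithin γ (Icc a b) s = derivWithin γ (Icc a b) t := by
  rcases hs.2.lt_or_eq with hsb | rfl <;> rcases ht.2.lt_or_eq with htb | rfl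
  · rw [hγinj ⟨hs.1, hsb⟩ ⟨ht.1, htb⟩ hst]
  · rw [hγinj ⟨hs.1, hsb⟩ ⟨le_rfl, hs.1.trans_lt hsb⟩ (hst.trans hclose.symm), hclose']
  · rw [hγinj ⟨ht.1, htb⟩ ⟨le_rfl, ht.1.trans_lt htb⟩ (hst.symm.trans hclose.symm), hclose']
  · rfl

structure IsRegularSimpleClosedCurve {E : Type*} [NormedAddCommGroup E] [NormedSpace ℝ E]
    (γ : ℝ → E) (a b : ℝ) : Prop where
  lt : a < b
  contDiffOn : ContDiffOn ℝ 2 γ (Icc a b)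
  derivWithin_ne_zero : ∀ t ∈ Icc a b, derivWithin γ (Icc a b) t ≠ 0
  injOn : InjOn γ (Ico a b)
  apply_left_eq_right : γ a = γ b
  derivWithin_left_eq_right : derivWithin γ (Icc a b) a = derivWithin γ (Icc a b) b

section ClosedCurve

variable {E : Type*} [NormedAddCommGroup E] [InnerProductSpace ℝ E] {γ : ℝ → E} {a b : ℝ}

namespace IsRegularSimpleClosedCurve

theorem eventually_forall_norm_smul_le_norm_add_smul_sub
    (hγ : IsRegularSimpleClosedCurve γ a b) {t₀ : ℝ} (ht₀ : t₀ ∈ Icc a b) {η : E}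
    (hη : ⟪η, derivWithin γ (Icc a b) t₀⟫ = 0) :
    ∀ᶠ σ in 𝓝 (0 : ℝ), ∀ t ∈ Icc a b, ‖σ • η‖ ≤ ‖γ t₀ + σ • η - γ t‖ := by
  obtain ⟨M, hM⟩ := hγ.contDiffOn.exists_norm_sub_sub_smul_derivWithin_Icc_le hγ.lt
  refine (isCompact_Icc.eventually_forall_of_forall_eventually (x₀ := (0 : ℝ))
    (P := fun σ t => t ∈ Icc a b → ‖σ • η‖ ≤ ‖γ t₀ + σ • η - γ t‖) fun t ht => ?_).mono
    fun σ h t ht => h t ht ht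
  -- `γ t = γ t₀` only for `t = t₀` or at the seam `{a, b}`, where the tangents agree as well:
  -- there the Taylor estimate applies; elsewhere `γ` stays away from `γ t₀`.
  by_cases hγt : γ t = γ t₀
  · have hderiv := derivWithin_Icc_eq_of_apply_eq hγ.injOn hγ.apply_left_eq_right
      hγ.derivWithin_left_eq_right ht ht₀ hγt
    rw [← hγt]
    exact eventually_norm_smul_le_norm_add_smul_sub (hγ.derivWithin_ne_zero t ht) (hderiv ▸ hη)
      (hM t ht)
  · have hd : 0 < ‖γ t₀ - γ t‖ / 4 := by
      positivity [norm_pos_iff.2 (sub_ne_zero.2 (Ne.symm hγt))]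
    have hsmall : ∀ᶠ p : ℝ × ℝ in 𝓝 (0, t), ‖p.1 • η‖ < ‖γ t₀ - γ t‖ / 4 :=
      (continuous_fst.smul continuous_const).norm.continuousAt.eventually_lt
        continuousAt_const (by simpa using hd)
    have hnear : ∀ᶠ t' in 𝓝 t, t' ∈ Icc a b → dist (γ t') (γ t) < ‖γ t₀ - γ t‖ / 4 :=
      eventually_nhdsWithin_iff.1
        ((hγ.contDiffOn.continuousOn t ht).eventually (ball_mem_nhds _ hd))
    filter_upwards [hsmall, continuousAt_snd.eventually hnear] with p hp hp' hp2
    rw [dist_eq_norm] at hp'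
    have h₁ := norm_sub_le (γ t₀ + p.1 • η - γ p.2) (p.1 • η)
    have h₂ := norm_add_le ((γ t₀ + p.1 • η - γ p.2) - p.1 • η) (γ p.2 - γ t)
    rw [show (γ t₀ + p.1 • η - γ p.2) - p.1 • η + (γ p.2 - γ t) = γ t₀ - γ t by abel] at h₂
    linarith [hp' hp2]

variable {ε : ℝ} {p : E → E}

theorem eventually_apply_add_smul_eq (hγ : IsRegularSimpleClosedCurve γ a b) (hε : 0 < ε)
    (hp : ∀ x, infDist x (γ '' Icc a b) < ε → ∀ y ∈ γ '' Icc a b,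
      dist x y = infDist x (γ '' Icc a b) → y = p x)
    {t₀ : ℝ} (ht₀ : t₀ ∈ Icc a b) {η : E} (hη : ⟪η, derivWithin γ (Icc a b) t₀⟫ = 0) :
    ∀ᶠ σ in 𝓝 (0 : ℝ), p (γ t₀ + σ • η) = γ t₀ := by
  have hsmall : ∀ᶠ σ in 𝓝 (0 : ℝ), ‖σ • η‖ < ε :=
    (continuous_id.smul continuous_const).norm.continuousAt.eventually_lt continuousAt_const
      (by simpa using hε)
  filter_upwards [hγ.eventually_forall_norm_smul_le_norm_add_smul_sub ht₀ hη, hsmall]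
    with σ hnear hσ
  have hΓ : γ t₀ ∈ γ '' Icc a b := mem_image_of_mem γ ht₀
  have hdist : dist (γ t₀ + σ • η) (γ t₀) = infDist (γ t₀ + σ • η) (γ '' Icc a b) := by
    refine le_antisymm ((le_infDist ⟨_, hΓ⟩).2 ?_) (infDist_le_dist_of_mem hΓ)
    rintro _ ⟨t, ht, rfl⟩
    simpa [dist_eq_norm] using hnear t ht
  refine (hp _ ?_ _ hΓ hdist).symm
  rwa [← hdist, dist_eq_norm, add_sub_cancel_left]

theorem fderiv_sub_eq_starProjection (hγ : IsRegularSimpleClosedCurve γ a b) (hε : 0 < ε)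
    (hp : ∀ x, infDist x (γ '' Icc a b) < ε → ∀ y ∈ γ '' Icc a b,
      dist x y = infDist x (γ '' Icc a b) → y = p x)
    {t₀ : ℝ} (ht₀ : t₀ ∈ Icc a b) (hv : DifferentiableAt ℝ (fun x => x - p x) (γ t₀)) :
    fderiv ℝ (fun x => x - p x) (γ t₀) = (ℝ ∙ derivWithin γ (Icc a b) t₀)ᗮ.starProjection := by
  refine ContinuousLinearMap.eq_starProjection_orthogonal_span_singleton ?_ fun η hη => ?_
  · have hvγ : HasDerivWithinAt (fun t => γ t - p (γ t))
        (fderiv ℝ (fun x => x - p x) (γ t₀) (derivWithin γ (Icc a b) t₀)) (Icc a b) t₀ :=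
      hv.hasFDerivAt.comp_hasDerivWithinAt t₀
        ((hγ.contDiffOn.differentiableOn two_ne_zero t₀ ht₀).hasDerivWithinAt)
    have hzero : HasDerivWithinAt (fun t => γ t - p (γ t)) 0 (Icc a b) t₀ :=
      (hasDerivWithinAt_const t₀ _ 0).congr
        (fun t ht => by rw [apply_eq_self_of_mem hε hp (mem_image_of_mem γ ht), sub_self])
        (by rw [apply_eq_self_of_mem hε hp (mem_image_of_mem γ ht₀), sub_self])
    exact (uniqueDiffOn_Icc hγ.lt t₀ ht₀).eq_deriv _ hvγ hzero
  · have hsmul : HasDerivAt (fun σ : ℝ => σ • η) η 0 := by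
      simpa using (hasDerivAt_id (0 : ℝ)).smul_const η
    have hvline := hv.hasFDerivAt.comp_hasDerivAt_of_eq 0 (hsmul.const_add (γ t₀)) (by simp)
    refine hvline.unique (hsmul.congr_of_eventuallyEq ?_)
    filter_upwards [hγ.eventually_apply_add_smul_eq hε hp ht₀ hη] with σ hσ
    simp [hσ]

end IsRegularSimpleClosedCurve

end ClosedCurve

theorem limits_of_divergence_and_quadratic_form_circuit_general (n : ℕ) (hn : 3 ≤ n)
    (a b : ℝ) (hab : a < b)
    (γ : ℝ → Euc n) (hγ : ContDiffOn ℝ 3 γ (Set.Icc a b))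
    (hγ' : ∀ t ∈ Set.Icc a b, curveDeriv γ a b t ≠ 0)
    (hclose : γ a = γ b) (hclose' : curveDeriv γ a b a = curveDeriv γ a b b)
    (hγinj : Set.InjOn γ (Set.Ico a b))
    (εbar₁ : ℝ) (pnear : Euc n → Euc n)
    (hpuniq : ∀ x ∈ distTube (γ '' Set.Icc a b) εbar₁, ∀ y ∈ γ '' Set.Icc a b,
      dist x y = infDist x (γ '' Set.Icc a b) → y = pnear x)
    (ε' : ℝ) (hε' : ε' ∈ Set.Ioo 0 εbar₁)
    (hC1 : ContDiffOn ℝ 1 (fun x => x - pnear x)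
      (closure (distTube (γ '' Set.Icc a b) ε'))) :
    ∀ δ > 0, ∃ ε₀ > 0, ∀ ε : ℝ, 0 < ε → ε < ε₀ →
      (∀ x ∈ distTube (γ '' Set.Icc a b) ε,
        |(n : ℝ) - 1 - LinearMap.trace ℝ (Euc n)
          (fderiv ℝ (fun y => y - pnear y) x : Euc n →ₗ[ℝ] Euc n)| < δ) ∧
      (∀ x ∈ distTube (γ '' Set.Icc a b) ε, ∀ η : Euc n, ‖η‖ = 1 →
        (inner ℝ (fderiv ℝ (fun y => y - pnear y) x η) η : ℝ) < 1 + δ) ∧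
      (∃ x ∈ distTube (γ '' Set.Icc a b) ε, ∃ η : Euc n, ‖η‖ = 1 ∧
        1 - δ < (inner ℝ (fderiv ℝ (fun y => y - pnear y) x η) η : ℝ)) := by
  intro δ hδ
  obtain ⟨hε'₀, hε'₁⟩ := hε'
  set Γ := γ '' Icc a b
  have hcurve : IsRegularSimpleClosedCurve γ a b :=
    ⟨hab, hγ.of_le (by norm_num), hγ', hγinj, hclose, hclose'⟩
  have hU : IsOpen (distTube Γ ε') := isOpen_lt (continuous_infDist_pt Γ) continuous_const
  have hΓU : ∀ y ∈ Γ, distTube Γ ε' ∈ 𝓝 y := fun y hy =>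
    hU.mem_nhds (show infDist y Γ < ε' by rwa [infDist_zero_of_mem hy])
  have hv := hC1.mono (subset_closure (s := distTube Γ ε'))
  have hDvΓ : ∀ t ∈ Icc a b, fderiv ℝ (fun y => y - pnear y) (γ t) =
      (ℝ ∙ curveDeriv γ a b t)ᗮ.starProjection := fun t ht =>
    hcurve.fderiv_sub_eq_starProjection (hε'₀.trans hε'₁) hpuniq ht
      ((hv.contDiffAt (hΓU _ (mem_image_of_mem γ ht))).differentiableAt one_ne_zero)
  have hΓ : IsCompact Γ := isCompact_Icc.image_of_continuousOn hγ.continuousOn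
  have ha : a ∈ Icc a b := ⟨le_rfl, hab.le⟩
  obtain ⟨ρ, hρ, hest⟩ := hΓ.exists_forall_infDist_lt_trace_lt_inner_lt ⟨_, mem_image_of_mem γ ha⟩
    (fun y hy => (hv.continuousOn_fderiv_of_isOpen hU le_rfl).continuousAt (hΓU y hy))
    (by rintro _ ⟨t, ht, rfl⟩; exact ⟨_, hγ' t ht, hDvΓ t ht⟩) hδ
  refine ⟨ρ, hρ, fun ε hε hερ => ⟨fun x hx => ?_, fun x hx => (hest x (hx.trans hερ)).2, ?_⟩⟩
  · simpa using (hest x (hx.trans hερ)).1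
  · obtain ⟨η, hη, hη1⟩ := exists_norm_eq_one_inner_starProjection_orthogonal_span_singleton_eq_one
      (by rw [finrank_euclideanSpace_fin]; omega) (hγ' a ha)
    refine ⟨γ a, show infDist (γ a) Γ < ε by rwa [infDist_zero_of_mem (mem_image_of_mem γ ha)],
      η, hη, ?_⟩
    rw [hDvΓ a ha, hη1]
    linarith

/-- Limits (2.31) and (2.33): `sup{|n−1−div ṽ(x)| : x ∈ T̃_ε(Γ̃)} → 0` and
`sup{dṽ(x)[η]·η : x ∈ T̃_ε(Γ̃), |η| = 1} → 1` as `ε → 0⁺`. -/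
theorem limits_of_divergence_and_quadratic_form_circuit (n : ℕ) (hn : 3 ≤ n)
    (a b : ℝ) (hab : a < b)
    (γ : ℝ → Euc n) (hγ : ContDiffOn ℝ 3 γ (Set.Icc a b))
    (hγ' : ∀ t ∈ Set.Icc a b, curveDeriv γ a b t ≠ 0)
    (hclose : γ a = γ b) (hclose' : curveDeriv γ a b a = curveDeriv γ a b b)
    (hγinj : Set.InjOn γ (Set.Ico a b))
    (εbar₁ : ℝ) (hεbar₁ : 0 < εbar₁) (pnear : Euc n → Euc n)
    (hpΓ : ∀ x ∈ distTube (γ '' Set.Icc a b) εbar₁, pnear x ∈ γ '' Set.Icc a b)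
    (hpdist : ∀ x ∈ distTube (γ '' Set.Icc a b) εbar₁,
      dist x (pnear x) = infDist x (γ '' Set.Icc a b))
    (hpuniq : ∀ x ∈ distTube (γ '' Set.Icc a b) εbar₁, ∀ y ∈ γ '' Set.Icc a b,
      dist x y = infDist x (γ '' Set.Icc a b) → y = pnear x)
    (ε' : ℝ) (hε' : ε' ∈ Set.Ioo 0 εbar₁)
    (hC1 : ContDiffOn ℝ 1 (fun x => x - pnear x)
      (closure (distTube (γ '' Set.Icc a b) ε'))) :
    ∀ δ > 0, ∃ ε₀ > 0, ∀ ε : ℝ, 0 < ε → ε < ε₀ →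
      (∀ x ∈ distTube (γ '' Set.Icc a b) ε,
        |(n : ℝ) - 1 - LinearMap.trace ℝ (Euc n)
          (fderiv ℝ (fun y => y - pnear y) x : Euc n →ₗ[ℝ] Euc n)| < δ) ∧
      (∀ x ∈ distTube (γ '' Set.Icc a b) ε, ∀ η : Euc n, ‖η‖ = 1 →
        (inner ℝ (fderiv ℝ (fun y => y - pnear y) x η) η : ℝ) < 1 + δ) ∧
      (∃ x ∈ distTube (γ '' Set.Icc a b) ε, ∃ η : Euc n, ‖η‖ = 1 ∧
        1 - δ < (inner ℝ (fderiv ℝ (fun y => y - pnear y) x η) η : ℝ)) :=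
  limits_of_divergence_and_quadratic_form_circuit_general n hn a b hab γ hγ hγ' hclose hclose' hγinj
    εbar₁ pnear hpuniq ε' hε' hC1
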